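/- arXiv:2512.06564 — 2 statements merged into one kernel-verified Lean document; each statement's English description precedes it below -/
import Mathlib

section
/- If M is a model of IΔ₀ and n ∈ M with n ≥ 1, then the truncation M↾n is a model of the full theory of finite arithmetic FA; in particular M↾n satisfies the full induction scheme in the language of finite arithmetic. -/
open FirstOrder FirstOrder.Language

namespace UF

/-! ## The language of finite arithmetic -/

/-- Function symbols of the language of finite arithmetic: constants `0`, `1`, `N`. -/
inductive FAFunc : ℕ → Type
  | zero : FAFunc 0
  | one : FAFunc 0
  | top : FAFunc 0

/-- Relation symbols of the language of finite arithmetic: the order `<` and the graphs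
of the partial operations `+` and `·`. -/
inductive FARel : ℕ → Type
  | lt : FARel 2
  | plus : FARel 3
  | times : FARel 3

/-- The language of finite arithmetic: `<`, constants `0`, `1`, `N`, and ternary relation
symbols encoding the graphs of the partial binary operations `+` and `·`. -/
def LFA : Language := ⟨FAFunc, FARel⟩

abbrev FATerm (n : ℕ) := LFA.Term (Empty ⊕ Fin n)

def fv {n : ℕ} (i : Fin n) : FATerm n := Term.var (Sum.inr i)
def f0 {n : ℕ} : FATerm n := Constants.term FAFunc.zero
def f1 {n : ℕ} : FATerm n := Constants.term FAFunc.one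
def fN {n : ℕ} : FATerm n := Constants.term FAFunc.top

def fLt {n : ℕ} (t u : FATerm n) : LFA.BoundedFormula Empty n :=
  BoundedFormula.rel FARel.lt ![t, u]
def fPlus {n : ℕ} (t u v : FATerm n) : LFA.BoundedFormula Empty n :=
  BoundedFormula.rel FARel.plus ![t, u, v]
def fTimes {n : ℕ} (t u v : FATerm n) : LFA.BoundedFormula Empty n :=
  BoundedFormula.rel FARel.times ![t, u, v]
def fEq {n : ℕ} (t u : FATerm n) : LFA.BoundedFormula Empty n :=
  Term.bdEqual t u

/-! ## The theory of finite arithmetic FA -/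

/-- `<` is irreflexive. -/
def axIrrefl : LFA.Sentence := ((fLt (fv 0) (fv 0)).not : LFA.BoundedFormula Empty 1).alls
/-- `<` is transitive. -/
def axTrans : LFA.Sentence :=
  (((fLt (fv 0) (fv 1) ⊓ fLt (fv 1) (fv 2)).imp (fLt (fv 0) (fv 2)) :
    LFA.BoundedFormula Empty 3)).alls
/-- `<` is a total (linear) order. -/
def axTotal : LFA.Sentence :=
  ((fLt (fv 0) (fv 1) ⊔ fEq (fv 0) (fv 1) ⊔ fLt (fv 1) (fv 0) :
    LFA.BoundedFormula Empty 2)).alls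
/-- `0` is the least element. -/
def axLeast : LFA.Sentence :=
  ((fEq (fv 0) f0 ⊔ fLt f0 (fv 0) : LFA.BoundedFormula Empty 1)).alls
/-- `N` is the largest element. -/
def axGreatest : LFA.Sentence :=
  ((fEq (fv 0) fN ⊔ fLt (fv 0) fN : LFA.BoundedFormula Empty 1)).alls

/-- Every `a < N` has an immediate successor, namely `a + 1`. -/
def axSucc : LFA.Sentence :=
  (((fLt (fv 0) fN).imp
      (((fPlus (fv 0) f1 (fv 1) ⊓ fLt (fv 0) (fv 1)) ⊓
        ((fLt (fv 0) (fv 2) ⊓ fLt (fv 2) (fv 1)) :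
            LFA.BoundedFormula Empty 3).not.all).ex) :
    LFA.BoundedFormula Empty 1)).alls

/-- Every `0 < b` has an immediate predecessor `a`, with `a + 1 = b` (discreteness). -/
def axPred : LFA.Sentence :=
  (((fLt f0 (fv 0)).imp
      (((fPlus (fv 1) f1 (fv 0) ⊓ fLt (fv 1) (fv 0)) ⊓
        ((fLt (fv 1) (fv 2) ⊓ fLt (fv 2) (fv 0)) :
            LFA.BoundedFormula Empty 3).not.all).ex) :
    LFA.BoundedFormula Empty 1)).alls

/-- `0 + 1 = 1`. -/
def axZeroOne : LFA.Sentence := fPlus f0 f1 f1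

/-- Addition is a partial function. -/
def axPlusFunc : LFA.Sentence :=
  (((fPlus (fv 0) (fv 1) (fv 2) ⊓ fPlus (fv 0) (fv 1) (fv 3)).imp
      (fEq (fv 2) (fv 3)) : LFA.BoundedFormula Empty 4)).alls
/-- `a + 0 = a`. -/
def axPlusZero : LFA.Sentence :=
  ((fPlus (fv 0) f0 (fv 0) : LFA.BoundedFormula Empty 1)).alls
/-- `a + (b+1) = (a+b) + 1`, in the sense that if the right-hand side is defined then so
is the left-hand side and they are equal.  Variables `a b s s' b'`, with `a+b=s`,
`s+1=s'` and `b+1=b'`, concluding `a+b'=s'`. -/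
def axPlusSucc : LFA.Sentence :=
  ((((fPlus (fv 0) (fv 1) (fv 2) ⊓ fPlus (fv 2) f1 (fv 3)) ⊓ fPlus (fv 1) f1 (fv 4)).imp
      (fPlus (fv 0) (fv 4) (fv 3)) : LFA.BoundedFormula Empty 5)).alls
/-- Multiplication is a partial function. -/
def axTimesFunc : LFA.Sentence :=
  (((fTimes (fv 0) (fv 1) (fv 2) ⊓ fTimes (fv 0) (fv 1) (fv 3)).imp
      (fEq (fv 2) (fv 3)) : LFA.BoundedFormula Empty 4)).alls
/-- `a · 0 = 0`. -/
def axTimesZero : LFA.Sentence :=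
  ((fTimes (fv 0) f0 f0 : LFA.BoundedFormula Empty 1)).alls
/-- `a · (b+1) = a·b + a`, in the sense that if the right-hand side is defined then so is
the left-hand side and they are equal.  Variables `a b p p' b'`, with `a·b=p`, `p+a=p'`
and `b+1=b'`, concluding `a·b' = p'`. -/
def axTimesSucc : LFA.Sentence :=
  ((((fTimes (fv 0) (fv 1) (fv 2) ⊓ fPlus (fv 2) (fv 0) (fv 3)) ⊓ fPlus (fv 1) f1 (fv 4)).imp
      (fTimes (fv 0) (fv 4) (fv 3)) : LFA.BoundedFormula Empty 5)).alls

/-- The induction axiom for the formula `φ` (whose last variable is the induction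
variable, the other variables being parameters): if `φ(0)` holds and `φ` is propagated
from each `n < N` to its successor `n + 1`, then `φ` holds of every number. -/
def faInd {k : ℕ} (φ : LFA.BoundedFormula Empty (k + 1)) : LFA.Sentence :=
  let base : LFA.BoundedFormula Empty k := ((fEq (fv (Fin.last k)) f0).imp φ).all
  let step : LFA.BoundedFormula Empty k :=
    (((fLt (fv (⟨k, by omega⟩ : Fin (k + 2))) fN ⊓
        fPlus (fv (⟨k, by omega⟩ : Fin (k + 2))) f1 (fv (Fin.last (k + 1)))) ⊓
        φ.liftAt 1 (k + 1)).imp (φ.liftAt 1 k)).all.all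
  ((base ⊓ step).imp φ.all).alls

/-- The theory of finite arithmetic `FA`: arithmetic with a largest number `N`, in which
`<` is a discrete linear order with least element `0` and largest element `N`, every
`n < N` has the successor `n + 1`, addition and multiplication are partial functions
obeying the usual recursion equations, together with the full induction scheme. -/
def FA : LFA.Theory :=
  {axIrrefl, axTrans, axTotal, axLeast, axGreatest, axSucc, axPred, axZeroOne,
    axPlusFunc, axPlusZero, axPlusSucc, axTimesFunc, axTimesZero, axTimesSucc} ∪
  {σ | ∃ (k : ℕ) (φ : LFA.BoundedFormula Empty (k + 1)), σ = faInd φ}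

/-! ## The language of arithmetic and the theories IΔ₀ and PA -/

/-- Function symbols of the language of arithmetic: `0`, `1`, `+`, `·`. -/
inductive ArFunc : ℕ → Type
  | zero : ArFunc 0
  | one : ArFunc 0
  | plus : ArFunc 2
  | times : ArFunc 2

/-- Relation symbols of the language of arithmetic: `<`. -/
inductive ArRel : ℕ → Type
  | lt : ArRel 2

/-- The language of arithmetic `{+, ·, 0, 1, <}`. -/
def LAr : Language := ⟨ArFunc, ArRel⟩

abbrev ArTerm (n : ℕ) := LAr.Term (Empty ⊕ Fin n)

def av {n : ℕ} (i : Fin n) : ArTerm n := Term.var (Sum.inr i)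
def a0 {n : ℕ} : ArTerm n := Constants.term ArFunc.zero
def a1 {n : ℕ} : ArTerm n := Constants.term ArFunc.one
def aAdd {n : ℕ} (t u : ArTerm n) : ArTerm n := Term.func ArFunc.plus ![t, u]
def aMul {n : ℕ} (t u : ArTerm n) : ArTerm n := Term.func ArFunc.times ![t, u]

def aLt {n : ℕ} (t u : ArTerm n) : LAr.BoundedFormula Empty n :=
  BoundedFormula.rel ArRel.lt ![t, u]
def aEq {n : ℕ} (t u : ArTerm n) : LAr.BoundedFormula Empty n := Term.bdEqual t u

/-- The basic axioms of the nonnegative part of a discretely ordered commutative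
semiring. -/
def ArBasic : LAr.Theory :=
  { ((aEq (aAdd (aAdd (av 0) (av 1)) (av 2)) (aAdd (av 0) (aAdd (av 1) (av 2))) :
      LAr.BoundedFormula Empty 3)).alls,
    ((aEq (aAdd (av 0) (av 1)) (aAdd (av 1) (av 0)) : LAr.BoundedFormula Empty 2)).alls,
    ((aEq (aAdd (av 0) a0) (av 0) : LAr.BoundedFormula Empty 1)).alls,
    ((aEq (aMul (aMul (av 0) (av 1)) (av 2)) (aMul (av 0) (aMul (av 1) (av 2))) :
      LAr.BoundedFormula Empty 3)).alls,
    ((aEq (aMul (av 0) (av 1)) (aMul (av 1) (av 0)) : LAr.BoundedFormula Empty 2)).alls,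
    ((aEq (aMul (av 0) a1) (av 0) : LAr.BoundedFormula Empty 1)).alls,
    ((aEq (aMul (av 0) a0) a0 : LAr.BoundedFormula Empty 1)).alls,
    ((aEq (aMul (av 0) (aAdd (av 1) (av 2))) (aAdd (aMul (av 0) (av 1)) (aMul (av 0) (av 2))) :
      LAr.BoundedFormula Empty 3)).alls,
    ((aLt (av 0) (av 0)).not : LAr.BoundedFormula Empty 1).alls,
    (((aLt (av 0) (av 1) ⊓ aLt (av 1) (av 2)).imp (aLt (av 0) (av 2)) :
      LAr.BoundedFormula Empty 3)).alls,
    ((aLt (av 0) (av 1) ⊔ aEq (av 0) (av 1) ⊔ aLt (av 1) (av 0) :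
      LAr.BoundedFormula Empty 2)).alls,
    (((aLt (av 0) (av 1)).imp (aLt (aAdd (av 0) (av 2)) (aAdd (av 1) (av 2))) :
      LAr.BoundedFormula Empty 3)).alls,
    (((aLt (av 0) (av 1) ⊓ aLt a0 (av 2)).imp (aLt (aMul (av 0) (av 2)) (aMul (av 1) (av 2))) :
      LAr.BoundedFormula Empty 3)).alls,
    (((aLt (av 0) (av 1)).imp ((aEq (aAdd (av 0) (av 2)) (av 1) :
      LAr.BoundedFormula Empty 3).ex) : LAr.BoundedFormula Empty 2)).alls,
    ((aEq a0 (av 0) ⊔ aLt a0 (av 0) : LAr.BoundedFormula Empty 1)).alls,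
    (aLt a0 a1 : LAr.Sentence),
    (((aLt (av 0) (av 1)).imp
        (aEq (aAdd (av 0) a1) (av 1) ⊔ aLt (aAdd (av 0) a1) (av 1)) :
      LAr.BoundedFormula Empty 2)).alls }

/-- Δ₀ formulas of the language of arithmetic: formulas built from atomic formulas by
propositional connectives and bounded quantification `∀ x < t`.  (Bounded existential
quantification is expressible, since Δ₀ is closed under `¬` via `imp` and `⊥`.) -/
inductive IsDelta0 : {n : ℕ} → LAr.BoundedFormula Empty n → Prop
  | falsum {n : ℕ} : IsDelta0 (⊥ : LAr.BoundedFormula Empty n)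
  | equal {n : ℕ} (t u : ArTerm n) : IsDelta0 (Term.bdEqual t u)
  | rel {n l : ℕ} (R : LAr.Relations l) (ts : Fin l → ArTerm n) :
      IsDelta0 (BoundedFormula.rel R ts)
  | imp {n : ℕ} {φ ψ : LAr.BoundedFormula Empty n} :
      IsDelta0 φ → IsDelta0 ψ → IsDelta0 (φ.imp ψ)
  | bdAll {n : ℕ} (t : ArTerm n) {φ : LAr.BoundedFormula Empty (n + 1)} :
      IsDelta0 φ → IsDelta0 (((aLt (av (Fin.last n)) (t.liftAt 1 n)).imp φ).all)

/-- The induction axiom in the language of arithmetic for the formula `φ`, whose last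
variable is the induction variable, the remaining variables being parameters. -/
def arInd {k : ℕ} (φ : LAr.BoundedFormula Empty (k + 1)) : LAr.Sentence :=
  let base : LAr.BoundedFormula Empty k := ((aEq (av (Fin.last k)) a0).imp φ).all
  let step : LAr.BoundedFormula Empty k :=
    ((aEq (av (Fin.last (k + 1))) (aAdd (av (⟨k, by omega⟩ : Fin (k + 2))) a1)).imp
        ((φ.liftAt 1 (k + 1)).imp (φ.liftAt 1 k))).all.all
  ((base ⊓ step).imp φ.all).alls

/-- The theory `IΔ₀` of bounded induction: the basic axioms of the nonnegative part of a
discretely ordered commutative semiring together with induction for Δ₀ formulas. -/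
def IDelta0 : LAr.Theory :=
  ArBasic ∪ {σ | ∃ (k : ℕ) (φ : LAr.BoundedFormula Empty (k + 1)), IsDelta0 φ ∧ σ = arInd φ}

/-- Peano arithmetic `PA`: the basic axioms together with the full induction scheme. -/
def PA : LAr.Theory :=
  ArBasic ∪ {σ | ∃ (k : ℕ) (φ : LAr.BoundedFormula Empty (k + 1)), σ = arInd φ}

/-! ## Structures -/

/-- The standard model of arithmetic `ℕ` as a structure for the language of
arithmetic. -/
instance : LAr.Structure ℕ where
  funMap {n} f := match f with
    | .zero => fun _ => 0
    | .one => fun _ => 1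
    | .plus => fun v => v 0 + v 1
    | .times => fun v => v 0 * v 1
  RelMap {n} r := match r with
    | .lt => fun v => v 0 < v 1

section ArShorthands

variable (M : Type*) [LAr.Structure M]

/-- The interpretation of `0` in a structure for the language of arithmetic. -/
def arZero : M := Structure.funMap (L := LAr) ArFunc.zero ![]

/-- The interpretation of `1` in a structure for the language of arithmetic. -/
def arOne : M := Structure.funMap (L := LAr) ArFunc.one ![]

variable {M}

/-- The interpretation of `+` in a structure for the language of arithmetic. -/
def arAdd (x y : M) : M := Structure.funMap (L := LAr) ArFunc.plus ![x, y]

/-- The interpretation of `·` in a structure for the language of arithmetic. -/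
def arMul (x y : M) : M := Structure.funMap (L := LAr) ArFunc.times ![x, y]

/-- The interpretation of `<` in a structure for the language of arithmetic. -/
def arLt (x y : M) : Prop := Structure.RelMap (L := LAr) ArRel.lt ![x, y]

/-- `x ≤ y` in a structure for the language of arithmetic. -/
def arLe (x y : M) : Prop := arLt x y ∨ x = y

/-- The interpretation of the standard numeral `1 + 1 + ⋯ + 1` (`k` ones, with the
convention that the numeral for `0` is `0`). -/
def arNumeral : ℕ → M
  | 0 => arZero M
  | k + 1 => arAdd (arNumeral k) (arOne M)

/-- The `k`-fold product `x · x ⋯ · x` computed in `M` (with `x^0 = 1`). -/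
def arPow (x : M) : ℕ → M
  | 0 => arOne M
  | k + 1 => arMul (arPow x k) x

end ArShorthands

/-- The truncation of a structure `M` for the language of arithmetic at an element
`n ∈ M`: the domain is `{x ∈ M : x ≤ n}`. -/
abbrev ArCut (M : Type*) [LAr.Structure M] (n : M) : Type _ := {x : M // arLe x n}

/-- The truncated structure `M↾n` as a structure in the language of finite arithmetic:
the induced order, constants `0` and `1`, `N` interpreted as `n`, and with `x + y`
(respectively `x · y`) defined if and only if the sum (respectively product) computed in
`M` is `≤ n`, in which case it takes that value. -/
noncomputable instance ArCut.instStructure (M : Type*) [LAr.Structure M] (n : M) :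
    LFA.Structure (ArCut M n) where
  funMap {l} f := match f with
    | .zero => fun _ =>
        letI := Classical.dec (arLe (arZero M) n)
        if h : arLe (arZero M) n then ⟨arZero M, h⟩ else ⟨n, Or.inr rfl⟩
    | .one => fun _ =>
        letI := Classical.dec (arLe (arOne M) n)
        if h : arLe (arOne M) n then ⟨arOne M, h⟩ else ⟨n, Or.inr rfl⟩
    | .top => fun _ => ⟨n, Or.inr rfl⟩
  RelMap {l} r := match r with
    | .lt => fun v => arLt (v 0).val (v 1).val
    | .plus => fun v => arAdd (v 0).val (v 1).val = (v 2).val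
    | .times => fun v => arMul (v 0).val (v 1).val = (v 2).val

/-- The standard truncation model `ℕ↾n`, with domain `{0, 1, …, n}`. -/
abbrev TruncN (n : ℕ) : Type := ArCut ℕ n

section FAShorthands

variable (M : Type*) [LFA.Structure M]

/-- The interpretation of the constant `0` in a structure for the language of finite
arithmetic. -/
def faZero : M := Structure.funMap (L := LFA) FAFunc.zero ![]

/-- The interpretation of the constant `1`. -/
def faOne : M := Structure.funMap (L := LFA) FAFunc.one ![]

/-- The interpretation of the constant `N`, the largest number. -/
def faTop : M := Structure.funMap (L := LFA) FAFunc.top ![]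

variable {M}

/-- The interpretation of `<`. -/
def faLt (x y : M) : Prop := Structure.RelMap (L := LFA) FARel.lt ![x, y]

/-- `x ≤ y` in a structure for the language of finite arithmetic. -/
def faLe (x y : M) : Prop := faLt x y ∨ x = y

/-- The graph of the partial addition: `x + y = z`. -/
def faPlus (x y z : M) : Prop := Structure.RelMap (L := LFA) FARel.plus ![x, y, z]

/-- The graph of the partial multiplication: `x · y = z`. -/
def faTimes (x y z : M) : Prop := Structure.RelMap (L := LFA) FARel.times ![x, y, z]

end FAShorthands

/-- `IsNumeralFA M k a` asserts that `a` is the interpretation in `M` of the standard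
numeral `1 + 1 + ⋯ + 1` with `k` ones (computed via the graph of the partial
addition). -/
inductive IsNumeralFA (M : Type*) [LFA.Structure M] : ℕ → M → Prop
  | one : IsNumeralFA M 1 (faOne M)
  | succ {k : ℕ} {a b : M} : IsNumeralFA M k a → faPlus a (faOne M) b → IsNumeralFA M (k + 1) b

/-! ## End-extensions -/

/-- `j : M → N` realizes `N` as an end-extension of `M`, as structures in the language
of finite arithmetic: `N` contains (a copy of) `M` as a substructure, with the constant
`N` reinterpreted as the largest number of the extension; the order and the partial
addition and multiplication of the extension agree with those of `M` on arguments and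
values from `M`; and every element of the extension not in `M` lies above every element
of `M`. -/
structure IsEndExtFA {M N : Type*} [LFA.Structure M] [LFA.Structure N] (j : M → N) :
    Prop where
  inj : Function.Injective j
  map_zero : j (faZero M) = faZero N
  map_one : j (faOne M) = faOne N
  map_lt : ∀ x y : M, faLt (j x) (j y) ↔ faLt x y
  map_plus : ∀ x y z : M, faPlus (j x) (j y) (j z) ↔ faPlus x y z
  map_times : ∀ x y z : M, faTimes (j x) (j y) (j z) ↔ faTimes x y z
  isEnd : ∀ b : N, b ∉ Set.range j → ∀ x : M, faLt (j x) b

/-- An embedding `j : M ↪[LAr] N` of structures in the language of arithmetic realizes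
`N` as an end-extension of `M` if every element of `N` not in (the copy of) `M` is
greater than every element of `M`. -/
def IsEndExtAr {M N : Type*} [LAr.Structure M] [LAr.Structure N] (j : M ↪[LAr] N) : Prop :=
  ∀ b : N, b ∉ Set.range j → ∀ x : M, arLt (j x) b

/-! ## Bundled models -/

/-- A bundled model of a theory `T`. -/
structure BModel (L : FirstOrder.Language.{0, 0}) (T : L.Theory) : Type (u + 1) where
  /-- The underlying carrier. -/
  carrier : Type u
  [str : L.Structure carrier]
  models : Theory.Model carrier T

attribute [instance] BModel.str

/-! ## Propositional modal logic -/

/-- Propositional modal formulas, built from propositional variables and `⊥` by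
implication and the modal operator `□`. -/
inductive MForm : Type
  | var : ℕ → MForm
  | fls : MForm
  | imp : MForm → MForm → MForm
  | box : MForm → MForm

namespace MForm

/-- Negation, `¬φ := φ → ⊥`. -/
def neg (φ : MForm) : MForm := φ.imp fls

/-- Disjunction. -/
def or (φ ψ : MForm) : MForm := φ.neg.imp ψ

/-- Conjunction. -/
def and (φ ψ : MForm) : MForm := (φ.imp ψ.neg).neg

/-- Possibility, `◇φ := ¬□¬φ`. -/
def dia (φ : MForm) : MForm := (φ.neg.box).neg

end MForm

/-- Satisfaction of a propositional modal formula at a world of a Kripke frame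
`(W, R)` under a valuation `V`. -/
def MSat {W : Type*} (R : W → W → Prop) (V : ℕ → W → Prop) : W → MForm → Prop
  | w, .var n => V n w
  | _, .fls => False
  | w, .imp φ ψ => MSat R V w φ → MSat R V w ψ
  | w, .box φ => ∀ w' : W, R w w' → MSat R V w' φ

/-- A propositional modal formula is valid in a Kripke frame `(W, R)` if it is true at
every world under every valuation. -/
def MValid {W : Type*} (R : W → W → Prop) (φ : MForm) : Prop :=
  ∀ (V : ℕ → W → Prop) (w : W), MSat R V w φ

/-- The instance `□(φ→ψ) → (□φ→□ψ)` of the modal axiom K. -/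
def axMK (φ ψ : MForm) : MForm := ((φ.imp ψ).box).imp ((φ.box).imp (ψ.box))

/-- The instance `□φ → φ` of the modal axiom T. -/
def axMT (φ : MForm) : MForm := (φ.box).imp φ

/-- The instance `□φ → □□φ` of the modal axiom 4. -/
def axM4 (φ : MForm) : MForm := (φ.box).imp (φ.box.box)

/-- The instance `◇□φ → □◇φ` of the modal axiom (.2). -/
def axM2 (φ : MForm) : MForm := (φ.box.dia).imp (φ.dia.box)

/-- The instance `(◇φ ∧ ◇ψ) → (◇(φ ∧ ◇ψ) ∨ ◇(ψ ∧ ◇φ))` of the modal axiom (.3). -/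
def axM3 (φ ψ : MForm) : MForm :=
  ((φ.dia).and (ψ.dia)).imp (((φ.and ψ.dia).dia).or ((ψ.and φ.dia).dia))

/-- Propositional evaluation of a modal formula under an assignment of truth values to
subformulas, treating propositional variables and boxed formulas as atoms.  A formula is
a propositional tautology when it evaluates to true under every such assignment. -/
def peval (v : MForm → Prop) : MForm → Prop
  | .var n => v (.var n)
  | .fls => False
  | .imp φ ψ => peval v φ → peval v ψ
  | .box φ => v (.box φ)

/-- Derivability in the modal logic S4: classical propositional tautologies and the
axioms K, T and 4 (as schemes, hence closed under substitution), closed under modus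
ponens and necessitation. -/
inductive S4Prov : MForm → Prop
  | taut {φ : MForm} : (∀ v : MForm → Prop, peval v φ) → S4Prov φ
  | axK (φ ψ : MForm) : S4Prov (axMK φ ψ)
  | axT (φ : MForm) : S4Prov (axMT φ)
  | ax4 (φ : MForm) : S4Prov (axM4 φ)
  | mp {φ ψ : MForm} : S4Prov (φ.imp ψ) → S4Prov φ → S4Prov ψ
  | nec {φ : MForm} : S4Prov φ → S4Prov φ.box

/-! ## Potentialist semantics -/

/-- A bundled model of Peano arithmetic, a possible world of arithmetic end-extensional
potentialism. -/
abbrev PAModel : Type (u + 1) := BModel.{u} LAr PA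

/-- The accessibility relation of arithmetic end-extensional potentialism: `N` is
accessible from `M` when `N` is an end-extension of `M`. -/
def EndExtPA (M N : PAModel.{u}) : Prop :=
  ∃ j : M.carrier ↪[LAr] N.carrier, IsEndExtAr j

/-- Potentialist Kripke satisfaction for arithmetic end-extensional potentialism: the
worlds are the models of `PA`, the accessibility relation is end-extension, and the
propositional variables are interpreted by sentences of the language of arithmetic via
the substitution `s`. -/
def KSat (s : ℕ → LAr.Sentence) : MForm → PAModel.{u} → Prop
  | .var n, M => M.carrier ⊨ s n
  | .fls, _ => False
  | .imp φ ψ, M => KSat s φ M → KSat s ψ M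
  | .box φ, M => ∀ N : PAModel.{u}, EndExtPA M N → KSat s φ N

/-- The potentialist semantics for the potentialist translation of a first-order formula
over a potentialist system `𝒲` of substructures of a structure `W`: implication and
atomic formulas are interpreted at the current world, while the universal quantifier
`∀x` is interpreted as `□∀x`, ranging over the elements of all larger worlds of the
system (so that the derived existential quantifier `∃x` is interpreted as `◇∃x`).  This
is satisfaction of the potentialist translation `ψ^◇` at a world. -/
def PotRealize {L : FirstOrder.Language} {W : Type*} [L.Structure W]
    (𝒲 : Set (L.Substructure W)) :
    {n : ℕ} → L.BoundedFormula Empty n → L.Substructure W → (Fin n → W) → Prop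
  | _, .falsum, _, _ => False
  | _, .equal t u, _, v =>
      t.realize (Sum.elim Empty.elim v) = u.realize (Sum.elim Empty.elim v)
  | _, .rel R ts, _, v =>
      Structure.RelMap R fun i => (ts i).realize (Sum.elim Empty.elim v)
  | _, .imp φ ψ, M, v => PotRealize 𝒲 φ M v → PotRealize 𝒲 ψ M v
  | _, .all φ, M, v =>
      ∀ M' ∈ 𝒲, M ≤ M' → ∀ a : W, a ∈ M' → PotRealize 𝒲 φ M' (Fin.snoc v a)

/-! ## Gödel coding of sentences of the language of finite arithmetic -/

instance : Encodable (Σ n, LFA.Functions n) :=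
  Encodable.ofEquiv (Fin 3)
    { toFun := fun x => match x with
        | ⟨_, .zero⟩ => 0
        | ⟨_, .one⟩ => 1
        | ⟨_, .top⟩ => 2
      invFun := ![⟨0, .zero⟩, ⟨0, .one⟩, ⟨0, .top⟩]
      left_inv := by rintro ⟨_, f⟩ <;> cases f <;> rfl
      right_inv := by intro i; fin_cases i <;> rfl }

instance : Encodable (Σ n, LFA.Relations n) :=
  Encodable.ofEquiv (Fin 3)
    { toFun := fun x => match x with
        | ⟨_, .lt⟩ => 0
        | ⟨_, .plus⟩ => 1
        | ⟨_, .times⟩ => 2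
      invFun := ![⟨2, .lt⟩, ⟨3, .plus⟩, ⟨3, .times⟩]
      left_inv := by rintro ⟨_, r⟩ <;> cases r <;> rfl
      right_inv := by intro i; fin_cases i <;> rfl }

instance : Encodable (Σ n, LFA.BoundedFormula Empty n) :=
  Encodable.ofLeftInjection
    (fun φ : Σ n, LFA.BoundedFormula Empty n => φ.2.listEncode)
    (fun l => (BoundedFormula.listDecode l)[0]?)
    BoundedFormula.encoding.decode_encode

/-- A (computable) Gödel code for sentences of the language of finite arithmetic. -/
def sentCode (σ : LFA.Sentence) : ℕ :=
  Encodable.encode (⟨0, σ⟩ : Σ n, LFA.BoundedFormula Empty n)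

/-- The common theory of all the standard truncation models `ℕ↾n` for `n ≥ 1`. -/
def TruncCommonTheory : LFA.Theory :=
  {σ | ∀ n : ℕ, 1 ≤ n → TruncN n ⊨ σ}

/-- The set of Gödel codes of sentences in the common theory of the standard
truncations. -/
def TruncCommonCodes : Set ℕ :=
  {e | ∃ σ : LFA.Sentence, sentCode σ = e ∧ σ ∈ TruncCommonTheory}

/-- The halting problem: the set of pairs `(e, x)` such that the `e`-th partial
computable function halts on input `x`. -/
def HaltingProblem : ℕ × ℕ → Prop :=
  fun p => ((Denumerable.ofNat Nat.Partrec.Code p.1).eval p.2).Dom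

/-! ## Miscellaneous notions -/

/-- Σ₁ formulas: existential quantifications of Δ₀ formulas. -/
def IsSigma1 {n : ℕ} (φ : LAr.BoundedFormula Empty n) : Prop :=
  ∃ ψ : LAr.BoundedFormula Empty (n + 1), IsDelta0 ψ ∧ φ = ψ.ex

/-- The Gödel `β`-function predicate: `β(c, d, i) = y`, i.e. `y` is the remainder of `c`
modulo `1 + (i + 1)·d`, computed in a structure `M` for the language of arithmetic.
A pair `(c, d)` together with a length `ℓ` codes the finite sequence whose `i`-th entry
is `β(c, d, i)` for `i < ℓ`. -/
def betaRel {M : Type*} [LAr.Structure M] (c d i y : M) : Prop :=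
  ∃ q : M,
    arAdd (arMul q (arAdd (arOne M) (arMul (arAdd i (arOne M)) d))) y = c ∧
      arLt y (arAdd (arOne M) (arMul (arAdd i (arOne M)) d))

theorem arLt_nat {x y : ℕ} : arLt x y ↔ x < y := Iff.rfl

/-- The inclusion of the truncation `ℕ↾n` into `ℕ↾m` for `n ≤ m`. -/
def truncIncl {n m : ℕ} (h : n ≤ m) : TruncN n → TruncN m :=
  fun a => ⟨a.val, by
    have h2 : a.val < n ∨ a.val = n := by
      rcases a.2 with h' | h'
      · exact Or.inl (arLt_nat.1 h')
      · exact Or.inr h'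
    rcases Nat.lt_or_ge a.val m with hlt | hge
    · exact Or.inl (arLt_nat.2 hlt)
    · exact Or.inr (by omega)⟩


section Statement1Aux

variable {M : Type*} [LAr.Structure M]

/-! ### Normalizing the interpretation maps of `M` -/

lemma arFunMap_zero (v : Fin 0 → M) :
    Structure.funMap (L := LAr) ArFunc.zero v = arZero M := by
  unfold arZero; congr 1; funext i; exact i.elim0

lemma arFunMap_one (v : Fin 0 → M) :
    Structure.funMap (L := LAr) ArFunc.one v = arOne M := by
  unfold arOne; congr 1; funext i; exact i.elim0

lemma arFunMap_plus (v : Fin 2 → M) :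
    Structure.funMap (L := LAr) ArFunc.plus v = arAdd (v 0) (v 1) := by
  unfold arAdd; congr 1; funext i; fin_cases i <;> rfl

lemma arFunMap_times (v : Fin 2 → M) :
    Structure.funMap (L := LAr) ArFunc.times v = arMul (v 0) (v 1) := by
  unfold arMul; congr 1; funext i; fin_cases i <;> rfl

lemma arRelMap_lt (v : Fin 2 → M) :
    Structure.RelMap (L := LAr) ArRel.lt v ↔ arLt (v 0) (v 1) := by
  unfold arLt
  rw [show ![v 0, v 1] = v from funext fun i => by fin_cases i <;> rfl]

lemma realize_rel' {L : Language} {N : Type*} [L.Structure N] {α : Type*} {nn k : ℕ}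
    {R : L.Relations k} {ts : Fin k → L.Term (α ⊕ Fin nn)} {v : α → N} {xs : Fin nn → N} :
    (BoundedFormula.rel R ts).Realize v xs ↔
      Structure.RelMap R fun i => (ts i).realize (Sum.elim v xs) := Iff.rfl

lemma arRealize_func {N : Type*} [LAr.Structure N] {α : Type*} {k : ℕ} (v : α → N)
    (f : ArFunc k) (ts : Fin k → LAr.Term α) :
    Term.realize v (Term.func (L := LAr) f ts) =
      Structure.funMap (L := LAr) f (fun i => (ts i).realize v) := rfl

lemma faRealize_func {N : Type*} [LFA.Structure N] {α : Type*} {k : ℕ} (v : α → N)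
    (f : FAFunc k) (ts : Fin k → LFA.Term α) :
    Term.realize v (Term.func (L := LFA) f ts) =
      Structure.funMap (L := LFA) f (fun i => (ts i).realize v) := rfl

lemma arRealize_rel {N : Type*} [LAr.Structure N] {α : Type*} {nn k : ℕ}
    {R : ArRel k} {ts : Fin k → LAr.Term (α ⊕ Fin nn)} {v : α → N} {xs : Fin nn → N} :
    (BoundedFormula.rel (L := LAr) R ts).Realize v xs ↔
      Structure.RelMap (L := LAr) R fun i => (ts i).realize (Sum.elim v xs) := Iff.rfl

lemma faRealize_rel {N : Type*} [LFA.Structure N] {α : Type*} {nn k : ℕ}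
    {R : FARel k} {ts : Fin k → LFA.Term (α ⊕ Fin nn)} {v : α → N} {xs : Fin nn → N} :
    (BoundedFormula.rel (L := LFA) R ts).Realize v xs ↔
      Structure.RelMap (L := LFA) R fun i => (ts i).realize (Sum.elim v xs) := Iff.rfl

/-! ### Basic semiring and order facts in a model of `IΔ₀` -/

section Basics

variable (hM : M ⊨ IDelta0)
include hM

lemma ar_add_assoc (a b c : M) : arAdd (arAdd a b) c = arAdd a (arAdd b c) := by
  have h := hM.realize_of_mem _ (Set.mem_union_left _ (Set.mem_insert _ _))
  simp only [Sentence.Realize, BoundedFormula.realize_alls, aEq, aAdd, av,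
    BoundedFormula.realize_bdEqual, Term.realize_func, arRealize_func, faRealize_func, Term.realize_var, Sum.elim_inr, arFunMap_plus,
    Matrix.cons_val_zero, Matrix.cons_val_one, Matrix.head_cons] at h
  simpa using h ![a, b, c]

lemma ar_add_comm (a b : M) : arAdd a b = arAdd b a := by
  have h := hM.realize_of_mem _ (Set.mem_union_left _
    (Set.mem_insert_of_mem _ (Set.mem_insert _ _)))
  simp only [Sentence.Realize, BoundedFormula.realize_alls, aEq, aAdd, av,
    BoundedFormula.realize_bdEqual, Term.realize_func, arRealize_func, faRealize_func, Term.realize_var, Sum.elim_inr, arFunMap_plus,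
    Matrix.cons_val_zero, Matrix.cons_val_one, Matrix.head_cons] at h
  simpa using h ![a, b]

lemma ar_add_zero (a : M) : arAdd a (arZero M) = a := by
  have h := hM.realize_of_mem _ (Set.mem_union_left _
    (Set.mem_insert_of_mem _ (Set.mem_insert_of_mem _ (Set.mem_insert _ _))))
  simp only [Sentence.Realize, BoundedFormula.realize_alls, aEq, aAdd, av, a0,
    BoundedFormula.realize_bdEqual, Term.realize_func, arRealize_func, faRealize_func, Term.realize_var, Sum.elim_inr, arFunMap_plus,
    arFunMap_zero, Matrix.cons_val_zero, Matrix.cons_val_one, Matrix.head_cons,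
    Constants.term] at h
  simpa using h ![a]

lemma ar_mul_comm (a b : M) : arMul a b = arMul b a := by
  have h := hM.realize_of_mem _ (Set.mem_union_left _
    (Set.mem_insert_of_mem _ (Set.mem_insert_of_mem _ (Set.mem_insert_of_mem _
      (Set.mem_insert_of_mem _ (Set.mem_insert _ _))))))
  simp only [Sentence.Realize, BoundedFormula.realize_alls, aEq, aMul, av,
    BoundedFormula.realize_bdEqual, Term.realize_func, arRealize_func, faRealize_func, Term.realize_var, Sum.elim_inr, arFunMap_times,
    Matrix.cons_val_zero, Matrix.cons_val_one, Matrix.head_cons] at h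
  simpa using h ![a, b]

lemma ar_mul_one (a : M) : arMul a (arOne M) = a := by
  have h := hM.realize_of_mem _ (Set.mem_union_left _
    (Set.mem_insert_of_mem _ (Set.mem_insert_of_mem _ (Set.mem_insert_of_mem _
      (Set.mem_insert_of_mem _ (Set.mem_insert_of_mem _ (Set.mem_insert _ _)))))))
  simp only [Sentence.Realize, BoundedFormula.realize_alls, aEq, aMul, av, a1,
    BoundedFormula.realize_bdEqual, Term.realize_func, arRealize_func, faRealize_func, Term.realize_var, Sum.elim_inr, arFunMap_times,
    arFunMap_one, Matrix.cons_val_zero, Matrix.cons_val_one, Matrix.head_cons,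
    Constants.term] at h
  simpa using h ![a]

lemma ar_mul_zero (a : M) : arMul a (arZero M) = arZero M := by
  have h := hM.realize_of_mem _ (Set.mem_union_left _
    (Set.mem_insert_of_mem _ (Set.mem_insert_of_mem _ (Set.mem_insert_of_mem _
      (Set.mem_insert_of_mem _ (Set.mem_insert_of_mem _ (Set.mem_insert_of_mem _
        (Set.mem_insert _ _))))))))
  simp only [Sentence.Realize, BoundedFormula.realize_alls, aEq, aMul, av, a0,
    BoundedFormula.realize_bdEqual, Term.realize_func, arRealize_func, faRealize_func, Term.realize_var, Sum.elim_inr, arFunMap_times,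
    arFunMap_zero, Matrix.cons_val_zero, Matrix.cons_val_one, Matrix.head_cons,
    Constants.term] at h
  simpa using h ![a]

lemma ar_distrib (a b c : M) :
    arMul a (arAdd b c) = arAdd (arMul a b) (arMul a c) := by
  have h := hM.realize_of_mem _ (Set.mem_union_left _
    (Set.mem_insert_of_mem _ (Set.mem_insert_of_mem _ (Set.mem_insert_of_mem _
      (Set.mem_insert_of_mem _ (Set.mem_insert_of_mem _ (Set.mem_insert_of_mem _
        (Set.mem_insert_of_mem _ (Set.mem_insert _ _)))))))))
  simp only [Sentence.Realize, BoundedFormula.realize_alls, aEq, aMul, aAdd, av,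
    BoundedFormula.realize_bdEqual, Term.realize_func, arRealize_func, faRealize_func, Term.realize_var, Sum.elim_inr, arFunMap_times,
    arFunMap_plus, Matrix.cons_val_zero, Matrix.cons_val_one, Matrix.head_cons] at h
  simpa using h ![a, b, c]

lemma ar_lt_irrefl (a : M) : ¬ arLt a a := by
  have h := hM.realize_of_mem _ (Set.mem_union_left _
    (Set.mem_insert_of_mem _ (Set.mem_insert_of_mem _ (Set.mem_insert_of_mem _
      (Set.mem_insert_of_mem _ (Set.mem_insert_of_mem _ (Set.mem_insert_of_mem _
        (Set.mem_insert_of_mem _ (Set.mem_insert_of_mem _ (Set.mem_insert _ _))))))))))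
  simp only [Sentence.Realize, BoundedFormula.realize_alls, aLt, av,
    BoundedFormula.realize_not, realize_rel', arRealize_rel, faRealize_rel, Term.realize_var, Sum.elim_inr,
    arRelMap_lt, Matrix.cons_val_zero, Matrix.cons_val_one, Matrix.head_cons] at h
  simpa using h ![a]

lemma ar_lt_trans {a b c : M} (h1 : arLt a b) (h2 : arLt b c) : arLt a c := by
  have h := hM.realize_of_mem _ (Set.mem_union_left _
    (Set.mem_insert_of_mem _ (Set.mem_insert_of_mem _ (Set.mem_insert_of_mem _
      (Set.mem_insert_of_mem _ (Set.mem_insert_of_mem _ (Set.mem_insert_of_mem _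
        (Set.mem_insert_of_mem _ (Set.mem_insert_of_mem _ (Set.mem_insert_of_mem _
          (Set.mem_insert _ _)))))))))))
  simp only [Sentence.Realize, BoundedFormula.realize_alls, aLt, av,
    BoundedFormula.realize_imp, BoundedFormula.realize_inf, realize_rel', arRealize_rel, faRealize_rel,
    Term.realize_var, Sum.elim_inr, arRelMap_lt, Matrix.cons_val_zero,
    Matrix.cons_val_one, Matrix.head_cons] at h
  have := h ![a, b, c]
  simp only [Matrix.cons_val_zero, Matrix.cons_val_one, Matrix.head_cons,
    Matrix.cons_val_two, Matrix.tail_cons] at this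
  exact this ⟨h1, h2⟩

lemma ar_lt_total (a b : M) : arLt a b ∨ a = b ∨ arLt b a := by
  have h := hM.realize_of_mem _ (Set.mem_union_left _
    (Set.mem_insert_of_mem _ (Set.mem_insert_of_mem _ (Set.mem_insert_of_mem _
      (Set.mem_insert_of_mem _ (Set.mem_insert_of_mem _ (Set.mem_insert_of_mem _
        (Set.mem_insert_of_mem _ (Set.mem_insert_of_mem _ (Set.mem_insert_of_mem _
          (Set.mem_insert_of_mem _ (Set.mem_insert _ _))))))))))))
  simp only [Sentence.Realize, BoundedFormula.realize_alls, aLt, aEq, av,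
    BoundedFormula.realize_sup, realize_rel', arRealize_rel, faRealize_rel, BoundedFormula.realize_bdEqual, Term.realize_var,
    Sum.elim_inr, arRelMap_lt, Matrix.cons_val_zero, Matrix.cons_val_one,
    Matrix.head_cons] at h
  have := h ![a, b]
  simp only [Matrix.cons_val_zero, Matrix.cons_val_one, Matrix.head_cons] at this
  tauto

lemma ar_add_lt_add {a b : M} (c : M) (h1 : arLt a b) :
    arLt (arAdd a c) (arAdd b c) := by
  have h := hM.realize_of_mem _ (Set.mem_union_left _
    (Set.mem_insert_of_mem _ (Set.mem_insert_of_mem _ (Set.mem_insert_of_mem _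
      (Set.mem_insert_of_mem _ (Set.mem_insert_of_mem _ (Set.mem_insert_of_mem _
        (Set.mem_insert_of_mem _ (Set.mem_insert_of_mem _ (Set.mem_insert_of_mem _
          (Set.mem_insert_of_mem _ (Set.mem_insert_of_mem _
            (Set.mem_insert _ _)))))))))))))
  simp only [Sentence.Realize, BoundedFormula.realize_alls, aLt, aAdd, av,
    BoundedFormula.realize_imp, realize_rel', arRealize_rel, faRealize_rel, Term.realize_func, arRealize_func, faRealize_func, Term.realize_var,
    Sum.elim_inr, arRelMap_lt, arFunMap_plus, Matrix.cons_val_zero,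
    Matrix.cons_val_one, Matrix.head_cons] at h
  have := h ![a, b, c]
  simp only [Matrix.cons_val_zero, Matrix.cons_val_one, Matrix.head_cons,
    Matrix.cons_val_two, Matrix.tail_cons] at this
  exact this h1

lemma ar_lt_ex {a b : M} (h1 : arLt a b) : ∃ c : M, arAdd a c = b := by
  have h := hM.realize_of_mem _ (Set.mem_union_left _
    (Set.mem_insert_of_mem _ (Set.mem_insert_of_mem _ (Set.mem_insert_of_mem _
      (Set.mem_insert_of_mem _ (Set.mem_insert_of_mem _ (Set.mem_insert_of_mem _
        (Set.mem_insert_of_mem _ (Set.mem_insert_of_mem _ (Set.mem_insert_of_mem _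
          (Set.mem_insert_of_mem _ (Set.mem_insert_of_mem _ (Set.mem_insert_of_mem _
            (Set.mem_insert_of_mem _ (Set.mem_insert _ _)))))))))))))))
  simp only [Sentence.Realize, BoundedFormula.realize_alls, aLt, aEq, aAdd, av,
    BoundedFormula.realize_imp, BoundedFormula.realize_ex, realize_rel', arRealize_rel, faRealize_rel, BoundedFormula.realize_bdEqual,
    Term.realize_func, arRealize_func, faRealize_func, Term.realize_var, Sum.elim_inr, arRelMap_lt, arFunMap_plus,
    Matrix.cons_val_zero, Matrix.cons_val_one, Matrix.head_cons] at h
  have := h ![a, b] h1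
  obtain ⟨c, hc⟩ := this
  refine ⟨c, ?_⟩
  simpa [Fin.snoc] using hc

lemma ar_zero_le' (a : M) : arZero M = a ∨ arLt (arZero M) a := by
  have h := hM.realize_of_mem _ (Set.mem_union_left _
    (Set.mem_insert_of_mem _ (Set.mem_insert_of_mem _ (Set.mem_insert_of_mem _
      (Set.mem_insert_of_mem _ (Set.mem_insert_of_mem _ (Set.mem_insert_of_mem _
        (Set.mem_insert_of_mem _ (Set.mem_insert_of_mem _ (Set.mem_insert_of_mem _
          (Set.mem_insert_of_mem _ (Set.mem_insert_of_mem _ (Set.mem_insert_of_mem _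
            (Set.mem_insert_of_mem _ (Set.mem_insert_of_mem _
              (Set.mem_insert _ _))))))))))))))))
  simp only [Sentence.Realize, BoundedFormula.realize_alls, aLt, aEq, av, a0,
    BoundedFormula.realize_sup, realize_rel', arRealize_rel, faRealize_rel, BoundedFormula.realize_bdEqual, Term.realize_func, arRealize_func, faRealize_func,
    Term.realize_var, Sum.elim_inr, arRelMap_lt, arFunMap_zero, Matrix.cons_val_zero,
    Matrix.cons_val_one, Matrix.head_cons, Constants.term] at h
  simpa using h ![a]

lemma ar_zero_lt_one : arLt (arZero M) (arOne M) := by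
  have h := hM.realize_of_mem _ (Set.mem_union_left _
    (Set.mem_insert_of_mem _ (Set.mem_insert_of_mem _ (Set.mem_insert_of_mem _
      (Set.mem_insert_of_mem _ (Set.mem_insert_of_mem _ (Set.mem_insert_of_mem _
        (Set.mem_insert_of_mem _ (Set.mem_insert_of_mem _ (Set.mem_insert_of_mem _
          (Set.mem_insert_of_mem _ (Set.mem_insert_of_mem _ (Set.mem_insert_of_mem _
            (Set.mem_insert_of_mem _ (Set.mem_insert_of_mem _ (Set.mem_insert_of_mem _
              (Set.mem_insert _ _)))))))))))))))))
  simp only [Sentence.Realize, Formula.Realize, aLt, a0, a1, realize_rel', arRealize_rel, faRealize_rel, Term.realize_func, arRealize_func, faRealize_func,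
    arRelMap_lt, arFunMap_zero, arFunMap_one, Matrix.cons_val_zero,
    Matrix.cons_val_one, Matrix.head_cons, Constants.term] at h
  exact h

lemma ar_succ_le {a b : M} (h1 : arLt a b) :
    arAdd a (arOne M) = b ∨ arLt (arAdd a (arOne M)) b := by
  have h := hM.realize_of_mem _ (Set.mem_union_left _
    (Set.mem_insert_of_mem _ (Set.mem_insert_of_mem _ (Set.mem_insert_of_mem _
      (Set.mem_insert_of_mem _ (Set.mem_insert_of_mem _ (Set.mem_insert_of_mem _
        (Set.mem_insert_of_mem _ (Set.mem_insert_of_mem _ (Set.mem_insert_of_mem _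
          (Set.mem_insert_of_mem _ (Set.mem_insert_of_mem _ (Set.mem_insert_of_mem _
            (Set.mem_insert_of_mem _ (Set.mem_insert_of_mem _ (Set.mem_insert_of_mem _
              (Set.mem_insert_of_mem _ rfl)))))))))))))))))
  simp only [Sentence.Realize, BoundedFormula.realize_alls, aLt, aEq, aAdd, av, a1,
    BoundedFormula.realize_imp, BoundedFormula.realize_sup, realize_rel', arRealize_rel, faRealize_rel, BoundedFormula.realize_bdEqual,
    Term.realize_func, arRealize_func, faRealize_func, Term.realize_var, Sum.elim_inr, arRelMap_lt, arFunMap_plus,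
    arFunMap_one, Matrix.cons_val_zero, Matrix.cons_val_one, Matrix.head_cons,
    Constants.term] at h
  have := h ![a, b] h1
  simpa using this

/-! ### Derived order facts -/

lemma ar_lt_of_le_of_lt {a b c : M} (h1 : arLe a b) (h2 : arLt b c) : arLt a c := by
  rcases h1 with h1 | rfl
  · exact ar_lt_trans hM h1 h2
  · exact h2

lemma ar_lt_of_lt_of_le {a b c : M} (h1 : arLt a b) (h2 : arLe b c) : arLt a c := by
  rcases h2 with h2 | rfl
  · exact ar_lt_trans hM h1 h2
  · exact h1

lemma ar_le_trans {a b c : M} (h1 : arLe a b) (h2 : arLe b c) : arLe a c := by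
  rcases h2 with h2 | rfl
  · exact Or.inl (ar_lt_of_le_of_lt hM h1 h2)
  · exact h1

lemma ar_zero_le (a : M) : arLe (arZero M) a := by
  rcases ar_zero_le' hM a with h | h
  · exact Or.inr h
  · exact Or.inl h

lemma ar_zero_add (a : M) : arAdd (arZero M) a = a := by
  rw [ar_add_comm hM, ar_add_zero hM]

lemma ar_lt_succ_self (a : M) : arLt a (arAdd a (arOne M)) := by
  have h := ar_add_lt_add hM a (ar_zero_lt_one hM)
  rwa [ar_zero_add hM, ar_add_comm hM (arOne M) a] at h

lemma ar_succ_le_of_lt {a b : M} (h1 : arLt a b) : arLe (arAdd a (arOne M)) b := by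
  rcases ar_succ_le hM h1 with h | h
  · exact Or.inr h
  · exact Or.inl h

lemma ar_lt_succ_iff_le {a b : M} : arLt a (arAdd b (arOne M)) ↔ arLe a b := by
  constructor
  · intro h
    rcases ar_lt_total hM a b with h1 | h1 | h1
    · exact Or.inl h1
    · exact Or.inr h1
    · exact absurd (ar_lt_of_le_of_lt hM (ar_succ_le_of_lt hM h1) h)
        (ar_lt_irrefl hM _)
  · intro h
    exact ar_lt_of_le_of_lt hM h (ar_lt_succ_self hM b)

lemma ar_zero_add_one : arAdd (arZero M) (arOne M) = arOne M := ar_zero_add hM _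

lemma ar_pred_exists {b : M} (h1 : arLt (arZero M) b) :
    ∃ a : M, arAdd a (arOne M) = b ∧ arLt a b := by
  rcases ar_lt_total hM (arOne M) b with h2 | h2 | h2
  · obtain ⟨c, hc⟩ := ar_lt_ex hM h2
    refine ⟨c, by rwa [ar_add_comm hM], ?_⟩
    rw [← hc, ar_add_comm hM (arOne M) c]
    exact ar_lt_succ_self hM c
  · exact ⟨arZero M, by rw [ar_zero_add_one hM, h2],
      by rw [← h2]; exact ar_zero_lt_one hM⟩
  · have := ar_succ_le_of_lt hM h1
    rw [ar_zero_add_one hM] at this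
    exact absurd (ar_lt_of_le_of_lt hM this h2) (ar_lt_irrefl hM _)

end Basics

end Statement1Aux
section Statement1Trans

/-! ### The translation of formulas of finite arithmetic into arithmetic -/

/-- Translation of terms: the extra variable `0` stands for the top element `n`. -/
def trTerm : ∀ {m : ℕ}, FATerm m → ArTerm (m + 1)
  | _, Term.var (Sum.inl x) => x.elim
  | _, Term.var (Sum.inr i) => av i.succ
  | _, Term.func FAFunc.zero _ => a0
  | _, Term.func FAFunc.one _ => a1
  | _, Term.func FAFunc.top _ => av 0

/-- Translation of formulas: quantifiers become quantifiers bounded by `n + 1`. -/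
def trForm : ∀ {m : ℕ}, LFA.BoundedFormula Empty m → LAr.BoundedFormula Empty (m + 1)
  | _, BoundedFormula.falsum => BoundedFormula.falsum
  | _, BoundedFormula.equal t u => aEq (trTerm t) (trTerm u)
  | _, BoundedFormula.rel FARel.lt ts => aLt (trTerm (ts 0)) (trTerm (ts 1))
  | _, BoundedFormula.rel FARel.plus ts =>
      aEq (aAdd (trTerm (ts 0)) (trTerm (ts 1))) (trTerm (ts 2))
  | _, BoundedFormula.rel FARel.times ts =>
      aEq (aMul (trTerm (ts 0)) (trTerm (ts 1))) (trTerm (ts 2))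
  | _, BoundedFormula.imp φ ψ => (trForm φ).imp (trForm ψ)
  | m, BoundedFormula.all φ =>
      ((aLt (av (Fin.last (m + 1)))
          (((aAdd (av (0 : Fin (m + 1))) a1 : ArTerm (m + 1))).liftAt 1 (m + 1))).imp
        (trForm φ)).all

lemma trForm_delta0 : ∀ {m : ℕ} (φ : LFA.BoundedFormula Empty m), IsDelta0 (trForm φ)
  | _, BoundedFormula.falsum => IsDelta0.falsum
  | _, BoundedFormula.equal t u => IsDelta0.equal _ _
  | _, BoundedFormula.rel FARel.lt ts => IsDelta0.rel _ _
  | _, BoundedFormula.rel FARel.plus ts => IsDelta0.equal _ _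
  | _, BoundedFormula.rel FARel.times ts => IsDelta0.equal _ _
  | _, BoundedFormula.imp φ ψ => IsDelta0.imp (trForm_delta0 φ) (trForm_delta0 ψ)
  | _, BoundedFormula.all φ => IsDelta0.bdAll _ (trForm_delta0 φ)

lemma cons_snoc_comm {α : Type*} {m : ℕ} (x b : α) (q : Fin m → α) :
    (Fin.cons x (Fin.snoc q b) : Fin (m + 2) → α) = Fin.snoc (Fin.cons x q) b :=
  Fin.cons_snoc_eq_snoc_cons x q b

lemma snoc_zero' {α : Type*} {m : ℕ} (xs : Fin (m + 1) → α) (b : α) :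
    (Fin.snoc xs b : Fin (m + 2) → α) 0 = xs 0 := by
  rw [show (0 : Fin (m + 2)) = Fin.castSucc 0 by simp]
  exact Fin.snoc_castSucc _ _ _

variable {M : Type*} [LAr.Structure M] (hM : M ⊨ IDelta0) (n : M) (hn : arLe (arOne M) n)

include hM hn in
lemma h0n : arLe (arZero M) n := ar_le_trans hM (ar_zero_le hM (arOne M)) hn

include hM hn in
lemma cutFunMap_zero (v : Fin 0 → ArCut M n) :
    Structure.funMap (L := LFA) FAFunc.zero v = ⟨arZero M, h0n hM n hn⟩ := by
  exact dif_pos (h0n hM n hn)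

include hn in
lemma cutFunMap_one (v : Fin 0 → ArCut M n) :
    Structure.funMap (L := LFA) FAFunc.one v = ⟨arOne M, hn⟩ := by
  exact dif_pos hn

lemma cutFunMap_top (v : Fin 0 → ArCut M n) :
    Structure.funMap (L := LFA) FAFunc.top v = ⟨n, Or.inr rfl⟩ := rfl

lemma cutRelMap_lt (v : Fin 2 → ArCut M n) :
    Structure.RelMap (L := LFA) FARel.lt v ↔ arLt (v 0).val (v 1).val := Iff.rfl

lemma cutRelMap_plus (v : Fin 3 → ArCut M n) :
    Structure.RelMap (L := LFA) FARel.plus v ↔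
      arAdd (v 0).val (v 1).val = (v 2).val := Iff.rfl

lemma cutRelMap_times (v : Fin 3 → ArCut M n) :
    Structure.RelMap (L := LFA) FARel.times v ↔
      arMul (v 0).val (v 1).val = (v 2).val := Iff.rfl

lemma snoc_cons_val {m : ℕ} (v : Fin m → ArCut M n) (b : M) (hb : arLe b n) :
    (Fin.snoc (Fin.cons n fun i => (v i).val) b : Fin (m + 2) → M)
      = Fin.cons n (fun i => ((Fin.snoc v ⟨b, hb⟩ : Fin (m + 1) → ArCut M n) i).val) := by
  rw [show (fun i => ((Fin.snoc v (⟨b, hb⟩ : ArCut M n) : Fin (m + 1) → ArCut M n) i).val)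
      = Fin.snoc (fun i => (v i).val) b from funext fun i => by
        refine Fin.lastCases ?_ (fun j => ?_) i <;> simp,
    cons_snoc_comm]

include hM hn in
lemma trTerm_realize {m : ℕ} (t : FATerm m) (e : Empty → M) (e' : Empty → ArCut M n)
    (v : Fin m → ArCut M n) :
    (trTerm t).realize (Sum.elim e (Fin.cons n (fun i => (v i).val))) =
      (t.realize (Sum.elim e' v)).val := by
  match t with
  | Term.var (Sum.inl x) => exact x.elim
  | Term.var (Sum.inr i) =>
      simp [trTerm, av, Fin.cons_succ]
  | Term.func FAFunc.zero ts =>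
      simp [trTerm, a0, Constants.term, Term.realize_func, arRealize_func, faRealize_func, arFunMap_zero,
        cutFunMap_zero hM n hn]
  | Term.func FAFunc.one ts =>
      simp [trTerm, a1, Constants.term, Term.realize_func, arRealize_func, faRealize_func, arFunMap_one,
        cutFunMap_one n hn]
  | Term.func FAFunc.top ts =>
      simp [trTerm, av, Fin.cons_zero, faRealize_func, cutFunMap_top]

include hM in
lemma bnd_realize {m : ℕ} (e : Empty → M) (xs : Fin (m + 2) → M) :
    (aLt (av (Fin.last (m + 1)))
        (((aAdd (av (0 : Fin (m + 1))) a1 : ArTerm (m + 1))).liftAt 1 (m + 1))).Realize e xs ↔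
      arLe (xs (Fin.last (m + 1))) (xs 0) := by
  have h0 : Fin.castAdd 1 (0 : Fin (m + 1)) = (0 : Fin (m + 2)) := by ext; simp
  have : (aLt (av (Fin.last (m + 1)))
        (((aAdd (av (0 : Fin (m + 1))) a1 : ArTerm (m + 1))).liftAt 1 (m + 1))).Realize e xs ↔
      arLt (xs (Fin.last (m + 1))) (arAdd (xs 0) (arOne M)) := by
    simp only [aLt, realize_rel', arRealize_rel, faRealize_rel, arRelMap_lt, Matrix.cons_val_zero, Matrix.cons_val_one,
      Matrix.head_cons, av, a1, aAdd, Term.realize_var, Term.realize_func, arRealize_func, faRealize_func,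
      Term.realize_liftAt, Sum.elim_inr, arFunMap_plus, arFunMap_one, Constants.term,
      Function.comp_apply, Sum.map_inr, Fin.val_zero, Nat.succ_pos, if_pos, h0]
  rw [this, ar_lt_succ_iff_le hM]

include hM hn in
lemma trForm_realize {m : ℕ} (φ : LFA.BoundedFormula Empty m) (e : Empty → M)
    (e' : Empty → ArCut M n) (v : Fin m → ArCut M n) :
    (trForm φ).Realize e (Fin.cons n (fun i => (v i).val)) ↔ φ.Realize e' v := by
  induction φ with
  | falsum => exact Iff.rfl
  | @equal m t u =>
      show _ = _ ↔ _ = _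
      rw [trTerm_realize hM n hn t e e' v, trTerm_realize hM n hn u e e' v]
      exact ⟨fun h => Subtype.ext h, fun h => congrArg Subtype.val h⟩
  | @rel m l R ts =>
      cases R
      · simp only [trForm, aLt, realize_rel', arRealize_rel, faRealize_rel, arRelMap_lt, cutRelMap_lt,
          Matrix.cons_val_zero, Matrix.cons_val_one, Matrix.head_cons]
        rw [trTerm_realize hM n hn (ts 0) e e' v, trTerm_realize hM n hn (ts 1) e e' v]
      · simp only [trForm, aEq, BoundedFormula.realize_bdEqual, realize_rel', arRealize_rel, faRealize_rel,
          cutRelMap_plus, aAdd, Term.realize_func, arRealize_func, faRealize_func, arFunMap_plus,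
          Matrix.cons_val_zero, Matrix.cons_val_one, Matrix.head_cons]
        rw [trTerm_realize hM n hn (ts 0) e e' v, trTerm_realize hM n hn (ts 1) e e' v,
          trTerm_realize hM n hn (ts 2) e e' v]
      · simp only [trForm, aEq, BoundedFormula.realize_bdEqual, realize_rel', arRealize_rel, faRealize_rel,
          cutRelMap_times, aMul, Term.realize_func, arRealize_func, faRealize_func, arFunMap_times,
          Matrix.cons_val_zero, Matrix.cons_val_one, Matrix.head_cons]
        rw [trTerm_realize hM n hn (ts 0) e e' v, trTerm_realize hM n hn (ts 1) e e' v,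
          trTerm_realize hM n hn (ts 2) e e' v]
  | @imp m φ ψ ih1 ih2 =>
      show (_ → _) ↔ (_ → _)
      rw [ih1 v, ih2 v]
  | @all m φ ih =>
      simp only [trForm, BoundedFormula.realize_all, BoundedFormula.realize_imp]
      constructor
      · intro h a
        have hb := h a.val
        rw [bnd_realize hM, Fin.snoc_last, snoc_zero', Fin.cons_zero] at hb
        have h2 := hb a.2
        rw [snoc_cons_val n v a.val a.2] at h2
        exact (ih (Fin.snoc v ⟨a.val, a.2⟩)).1 h2
      · intro h b
        rw [bnd_realize hM, Fin.snoc_last, snoc_zero', Fin.cons_zero]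
        intro hb
        rw [snoc_cons_val n v b hb]
        exact (ih (Fin.snoc v ⟨b, hb⟩)).2 (h ⟨b, hb⟩)

end Statement1Trans
section Statement1Main

variable {M : Type*} [LAr.Structure M] (hM : M ⊨ IDelta0) (n : M) (hn : arLe (arOne M) n)

/-! ### Evaluation of `Fin.snoc` at literal indices -/

lemma snoc2_1 {α : Type*} (xs : Fin 1 → α) (b : α) : (Fin.snoc xs b : Fin 2 → α) 1 = b := by
  rw [show (1 : Fin 2) = Fin.last 1 from rfl, Fin.snoc_last]

lemma snoc3_1 {α : Type*} (xs : Fin 2 → α) (b : α) :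
    (Fin.snoc xs b : Fin 3 → α) 1 = xs 1 := by
  rw [show (1 : Fin 3) = Fin.castSucc 1 from rfl, Fin.snoc_castSucc]

lemma snoc3_2 {α : Type*} (xs : Fin 2 → α) (b : α) : (Fin.snoc xs b : Fin 3 → α) 2 = b := by
  rw [show (2 : Fin 3) = Fin.last 2 from rfl, Fin.snoc_last]

lemma snoc_snoc_k {α : Type*} {k : ℕ} (v : Fin k → α) (x y : α) :
    (Fin.snoc (Fin.snoc v x) y : Fin (k + 2) → α) ⟨k, by omega⟩ = x := by
  rw [show (⟨k, by omega⟩ : Fin (k + 2)) = Fin.castSucc (Fin.last k) from by ext; simp,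
    Fin.snoc_castSucc, Fin.snoc_last]

/-! ### `liftAt` computations -/

lemma liftAt_realize_self {L : Language} {N : Type*} [L.Structure N] {m : ℕ}
    (φ : L.BoundedFormula Empty (m + 1)) (e : Empty → N) (xs : Fin (m + 1) → N) (y : N) :
    (φ.liftAt 1 (m + 1)).Realize e (Fin.snoc xs y) ↔ φ.Realize e xs := by
  rw [BoundedFormula.realize_liftAt_one_self,
    show (Fin.snoc xs y : Fin (m + 2) → N) ∘ Fin.castSucc = xs from
      funext fun i => Fin.snoc_castSucc _ _ _]

lemma liftAt_realize_penult {L : Language} {N : Type*} [L.Structure N] {m : ℕ}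
    (φ : L.BoundedFormula Empty (m + 1)) (e : Empty → N) (xs : Fin m → N) (x y : N) :
    (φ.liftAt 1 m).Realize e (Fin.snoc (Fin.snoc xs x) y) ↔ φ.Realize e (Fin.snoc xs y) := by
  rw [BoundedFormula.realize_liftAt_one (Nat.le_succ m),
    show ((Fin.snoc (Fin.snoc xs x) y : Fin (m + 2) → N) ∘ fun i : Fin (m + 1) =>
        if (i : ℕ) < m then Fin.castSucc i else i.succ) = Fin.snoc xs y from funext fun i => ?_]
  refine Fin.lastCases ?_ (fun j => ?_) i
  · simp [Fin.succ_last]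
  · simp [Fin.is_lt j, Fin.snoc_castSucc]

/-! ### The basic axioms of `FA` in the truncation -/

include hM hn

lemma cut_axIrrefl : ArCut M n ⊨ axIrrefl := by
  have _ := h0n hM n hn
  simp only [axIrrefl, Sentence.Realize, BoundedFormula.realize_alls,
    BoundedFormula.realize_not, fLt, fv, realize_rel', arRealize_rel, faRealize_rel, cutRelMap_lt, Term.realize_var,
    Sum.elim_inr, Matrix.cons_val_zero, Matrix.cons_val_one, Matrix.head_cons]
  intro xs
  exact ar_lt_irrefl hM _

lemma cut_axTrans : ArCut M n ⊨ axTrans := by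
  have _ := h0n hM n hn
  simp only [axTrans, Sentence.Realize, BoundedFormula.realize_alls,
    BoundedFormula.realize_imp, BoundedFormula.realize_inf, fLt, fv, realize_rel', arRealize_rel, faRealize_rel,
    cutRelMap_lt, Term.realize_var, Sum.elim_inr, Matrix.cons_val_zero,
    Matrix.cons_val_one, Matrix.head_cons, Matrix.cons_val_two, Matrix.tail_cons]
  intro xs h
  exact ar_lt_trans hM h.1 h.2

lemma cut_axTotal : ArCut M n ⊨ axTotal := by
  have _ := h0n hM n hn
  simp only [axTotal, Sentence.Realize, BoundedFormula.realize_alls,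
    BoundedFormula.realize_sup, fLt, fEq, fv, realize_rel', arRealize_rel, faRealize_rel, cutRelMap_lt,
    BoundedFormula.realize_bdEqual, Term.realize_var, Sum.elim_inr,
    Matrix.cons_val_zero, Matrix.cons_val_one, Matrix.head_cons]
  intro xs
  rcases ar_lt_total hM (xs 0).val (xs 1).val with h | h | h
  · exact Or.inl (Or.inl h)
  · exact Or.inl (Or.inr (Subtype.ext h))
  · exact Or.inr h

lemma cut_axLeast : ArCut M n ⊨ axLeast := by
  simp only [axLeast, Sentence.Realize, BoundedFormula.realize_alls,
    BoundedFormula.realize_sup, fLt, fEq, fv, f0, realize_rel', arRealize_rel, faRealize_rel, cutRelMap_lt,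
    BoundedFormula.realize_bdEqual, Term.realize_var, Sum.elim_inr, Constants.term,
    Term.realize_func, arRealize_func, faRealize_func, cutFunMap_zero hM n hn, Matrix.cons_val_zero,
    Matrix.cons_val_one, Matrix.head_cons]
  intro xs
  rcases ar_zero_le' hM (xs 0).val with h | h
  · exact Or.inl (Subtype.ext h.symm)
  · exact Or.inr h

lemma cut_axGreatest : ArCut M n ⊨ axGreatest := by
  have _ := h0n hM n hn
  simp only [axGreatest, Sentence.Realize, BoundedFormula.realize_alls,
    BoundedFormula.realize_sup, fLt, fEq, fv, fN, realize_rel', arRealize_rel, faRealize_rel, cutRelMap_lt,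
    BoundedFormula.realize_bdEqual, Term.realize_var, Sum.elim_inr, Constants.term,
    Term.realize_func, arRealize_func, faRealize_func, cutFunMap_top, Matrix.cons_val_zero, Matrix.cons_val_one,
    Matrix.head_cons]
  intro xs
  rcases (xs 0).2 with h | h
  · exact Or.inr h
  · exact Or.inl (Subtype.ext h)

lemma cut_axSucc : ArCut M n ⊨ axSucc := by
  simp only [axSucc, Sentence.Realize, BoundedFormula.realize_alls,
    BoundedFormula.realize_imp, BoundedFormula.realize_inf, BoundedFormula.realize_ex,
    BoundedFormula.realize_all, BoundedFormula.realize_not, fLt, fPlus, fEq, fv, fN, f1,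
    realize_rel', arRealize_rel, faRealize_rel, cutRelMap_lt, cutRelMap_plus, Term.realize_var, Sum.elim_inr,
    Constants.term, Term.realize_func, arRealize_func, faRealize_func, cutFunMap_top, cutFunMap_one n hn,
    Matrix.cons_val_zero, Matrix.cons_val_one, Matrix.head_cons, Matrix.cons_val_two,
    Matrix.tail_cons, Fin.snoc_last, snoc_zero', snoc2_1, snoc3_1, snoc3_2]
  intro xs hlt
  have hle : arLe (arAdd (xs 0).val (arOne M)) n := ar_succ_le_of_lt hM hlt
  refine ⟨⟨arAdd (xs 0).val (arOne M), hle⟩, ⟨⟨rfl, ar_lt_succ_self hM _⟩, ?_⟩⟩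
  rintro c ⟨h1, h2⟩
  have := ar_lt_of_lt_of_le hM h1 ((ar_lt_succ_iff_le hM).mp h2)
  exact ar_lt_irrefl hM _ this

lemma cut_axPred : ArCut M n ⊨ axPred := by
  simp only [axPred, Sentence.Realize, BoundedFormula.realize_alls,
    BoundedFormula.realize_imp, BoundedFormula.realize_inf, BoundedFormula.realize_ex,
    BoundedFormula.realize_all, BoundedFormula.realize_not, fLt, fPlus, fEq, fv, f0, f1,
    realize_rel', arRealize_rel, faRealize_rel, cutRelMap_lt, cutRelMap_plus, Term.realize_var, Sum.elim_inr,
    Constants.term, Term.realize_func, arRealize_func, faRealize_func, cutFunMap_zero hM n hn, cutFunMap_one n hn,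
    Matrix.cons_val_zero, Matrix.cons_val_one, Matrix.head_cons, Matrix.cons_val_two,
    Matrix.tail_cons, Fin.snoc_last, snoc_zero', snoc2_1, snoc3_1, snoc3_2]
  intro xs hlt
  obtain ⟨a, ha, halt⟩ := ar_pred_exists hM hlt
  have hale : arLe a n := ar_le_trans hM (Or.inl halt) (xs 0).2
  refine ⟨⟨a, hale⟩, ⟨⟨ha, halt⟩, ?_⟩⟩
  rintro c ⟨h1, h2⟩
  rw [← ha] at h2
  have := ar_lt_of_lt_of_le hM h1 ((ar_lt_succ_iff_le hM).mp h2)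
  exact ar_lt_irrefl hM _ this

lemma cut_axZeroOne : ArCut M n ⊨ axZeroOne := by
  simp only [axZeroOne, Sentence.Realize, Formula.Realize, fPlus, f0, f1, realize_rel', arRealize_rel, faRealize_rel,
    cutRelMap_plus, Constants.term, Term.realize_func, arRealize_func, faRealize_func, cutFunMap_zero hM n hn,
    cutFunMap_one n hn, Matrix.cons_val_zero, Matrix.cons_val_one, Matrix.head_cons,
    Matrix.cons_val_two, Matrix.tail_cons]
  exact ar_zero_add_one hM

lemma cut_axPlusFunc : ArCut M n ⊨ axPlusFunc := by
  have _ := h0n hM n hn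
  simp only [axPlusFunc, Sentence.Realize, BoundedFormula.realize_alls,
    BoundedFormula.realize_imp, BoundedFormula.realize_inf, fPlus, fEq, fv,
    realize_rel', arRealize_rel, faRealize_rel, cutRelMap_plus, BoundedFormula.realize_bdEqual, Term.realize_var,
    Sum.elim_inr, Matrix.cons_val_zero, Matrix.cons_val_one, Matrix.head_cons,
    Matrix.cons_val_two, Matrix.tail_cons, Matrix.cons_val_three]
  intro xs h
  exact Subtype.ext (h.1.symm.trans h.2)

lemma cut_axPlusZero : ArCut M n ⊨ axPlusZero := by
  simp only [axPlusZero, Sentence.Realize, BoundedFormula.realize_alls, fPlus, fv, f0,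
    realize_rel', arRealize_rel, faRealize_rel, cutRelMap_plus, Term.realize_var, Sum.elim_inr, Constants.term,
    Term.realize_func, arRealize_func, faRealize_func, cutFunMap_zero hM n hn, Matrix.cons_val_zero,
    Matrix.cons_val_one, Matrix.head_cons, Matrix.cons_val_two, Matrix.tail_cons]
  intro xs
  exact ar_add_zero hM _

lemma cut_axPlusSucc : ArCut M n ⊨ axPlusSucc := by
  simp only [axPlusSucc, Sentence.Realize, BoundedFormula.realize_alls,
    BoundedFormula.realize_imp, BoundedFormula.realize_inf, fPlus, fv, f1,
    realize_rel', arRealize_rel, faRealize_rel, cutRelMap_plus, Term.realize_var, Sum.elim_inr, Constants.term,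
    Term.realize_func, arRealize_func, faRealize_func, cutFunMap_one n hn, Matrix.cons_val_zero, Matrix.cons_val_one,
    Matrix.head_cons, Matrix.cons_val_two, Matrix.tail_cons, Matrix.cons_val_three,
    Matrix.cons_val_four]
  intro xs h
  obtain ⟨⟨h1, h2⟩, h3⟩ := h
  rw [← h3, ← ar_add_assoc hM, h1, h2]

lemma cut_axTimesFunc : ArCut M n ⊨ axTimesFunc := by
  have _ := h0n hM n hn
  simp only [axTimesFunc, Sentence.Realize, BoundedFormula.realize_alls,
    BoundedFormula.realize_imp, BoundedFormula.realize_inf, fTimes, fEq, fv,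
    realize_rel', arRealize_rel, faRealize_rel, cutRelMap_times, BoundedFormula.realize_bdEqual, Term.realize_var,
    Sum.elim_inr, Matrix.cons_val_zero, Matrix.cons_val_one, Matrix.head_cons,
    Matrix.cons_val_two, Matrix.tail_cons, Matrix.cons_val_three]
  intro xs h
  exact Subtype.ext (h.1.symm.trans h.2)

lemma cut_axTimesZero : ArCut M n ⊨ axTimesZero := by
  simp only [axTimesZero, Sentence.Realize, BoundedFormula.realize_alls, fTimes, fv, f0,
    realize_rel', arRealize_rel, faRealize_rel, cutRelMap_times, Term.realize_var, Sum.elim_inr, Constants.term,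
    Term.realize_func, arRealize_func, faRealize_func, cutFunMap_zero hM n hn, Matrix.cons_val_zero,
    Matrix.cons_val_one, Matrix.head_cons, Matrix.cons_val_two, Matrix.tail_cons]
  intro xs
  exact ar_mul_zero hM _

lemma cut_axTimesSucc : ArCut M n ⊨ axTimesSucc := by
  simp only [axTimesSucc, Sentence.Realize, BoundedFormula.realize_alls,
    BoundedFormula.realize_imp, BoundedFormula.realize_inf, fPlus, fTimes, fv, f1,
    realize_rel', arRealize_rel, faRealize_rel, cutRelMap_plus, cutRelMap_times, Term.realize_var, Sum.elim_inr,
    Constants.term, Term.realize_func, arRealize_func, faRealize_func, cutFunMap_one n hn, Matrix.cons_val_zero,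
    Matrix.cons_val_one, Matrix.head_cons, Matrix.cons_val_two, Matrix.tail_cons,
    Matrix.cons_val_three, Matrix.cons_val_four]
  intro xs h
  obtain ⟨⟨h1, h2⟩, h3⟩ := h
  rw [← h3, ar_distrib hM, h1, ar_mul_one hM, h2]

/-! ### The induction scheme in the truncation -/

lemma cut_faInd {k : ℕ} (φ : LFA.BoundedFormula Empty (k + 1)) : ArCut M n ⊨ faInd φ := by
  have h0 := h0n hM n hn
  simp only [faInd, Sentence.Realize, BoundedFormula.realize_alls,
    BoundedFormula.realize_imp, BoundedFormula.realize_inf]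
  intro v hv
  obtain ⟨hbase, hstep⟩ := hv
  rw [BoundedFormula.realize_all]
  intro a
  -- the Δ₀ induction formula
  set ψ : LAr.BoundedFormula Empty (k + 2) :=
    (aLt (av (Fin.last (k + 1)))
        (((aAdd (av (0 : Fin (k + 1))) a1 : ArTerm (k + 1))).liftAt 1 (k + 1))).imp
      (trForm φ) with hψ
  have hψΔ : IsDelta0 ψ := IsDelta0.imp (IsDelta0.rel _ _) (trForm_delta0 φ)
  have hind := hM.realize_of_mem _ (Set.mem_union_right _ ⟨k + 1, ψ, hψΔ, rfl⟩)
  simp only [arInd, Sentence.Realize, BoundedFormula.realize_alls,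
    BoundedFormula.realize_imp, BoundedFormula.realize_inf] at hind
  set w : Fin (k + 1) → M := Fin.cons n (fun i => (v i).val) with hw
  have hψ_realize : ∀ (b : M) (hb : arLe b n),
      ψ.Realize (default : Empty → M) (Fin.snoc w b) ↔
        φ.Realize (default : Empty → ArCut M n) (Fin.snoc v ⟨b, hb⟩) := by
    intro b hb
    rw [hψ, BoundedFormula.realize_imp, bnd_realize hM, Fin.snoc_last, snoc_zero',
      hw, Fin.cons_zero, snoc_cons_val n v b hb,
      trForm_realize hM n hn φ default default (Fin.snoc v ⟨b, hb⟩)]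
    exact ⟨fun h => h hb, fun h _ => h⟩
  -- the base of the arithmetic induction
  have harBase : ((aEq (av (Fin.last (k + 1))) a0).imp ψ).all.Realize
      (default : Empty → M) w := by
    rw [BoundedFormula.realize_all]
    intro b
    rw [BoundedFormula.realize_imp]
    intro hb
    rw [aEq, BoundedFormula.realize_bdEqual] at hb
    simp only [av, a0, Term.realize_var, Sum.elim_inr, Fin.snoc_last, Constants.term,
      Term.realize_func, arRealize_func, faRealize_func, arFunMap_zero] at hb
    subst hb
    rw [hψ_realize (arZero M) h0]
    -- use the FA base
    rw [BoundedFormula.realize_all] at hbase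
    have := hbase ⟨arZero M, h0⟩
    rw [BoundedFormula.realize_imp] at this
    apply this
    rw [fEq, BoundedFormula.realize_bdEqual]
    simp only [fv, f0, Term.realize_var, Sum.elim_inr, Fin.snoc_last, Constants.term,
      Term.realize_func, arRealize_func, faRealize_func, cutFunMap_zero hM n hn]
  -- the step of the arithmetic induction
  have harStep : ((aEq (av (Fin.last (k + 2)))
        (aAdd (av (⟨k + 1, by omega⟩ : Fin (k + 3))) a1)).imp
        ((ψ.liftAt 1 (k + 2)).imp (ψ.liftAt 1 (k + 1)))).all.all.Realize
      (default : Empty → M) w := by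
    rw [BoundedFormula.realize_all]
    intro x
    rw [BoundedFormula.realize_all]
    intro y
    rw [BoundedFormula.realize_imp]
    intro hxy
    rw [aEq, BoundedFormula.realize_bdEqual] at hxy
    simp only [av, a1, aAdd, Term.realize_var, Term.realize_func, arRealize_func, faRealize_func, Sum.elim_inr,
      Fin.snoc_last, Constants.term, arFunMap_plus, arFunMap_one, Matrix.cons_val_zero,
      Matrix.cons_val_one, Matrix.head_cons, snoc_snoc_k] at hxy
    rw [BoundedFormula.realize_imp, liftAt_realize_self ψ _ _ y,
      liftAt_realize_penult ψ _ _ x y]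
    intro hx
    -- show ψ at (snoc w y)
    rw [hψ, BoundedFormula.realize_imp, bnd_realize hM, Fin.snoc_last, snoc_zero',
      hw, Fin.cons_zero]
    intro hy
    -- y ≤ n, y = x + 1
    have hylt : arLt x y := by rw [hxy]; exact ar_lt_succ_self hM x
    have hxle : arLe x n := ar_le_trans hM (Or.inl hylt) hy
    have hxltn : arLt x n := ar_lt_of_lt_of_le hM hylt hy
    have hxφ : φ.Realize (default : Empty → ArCut M n) (Fin.snoc v ⟨x, hxle⟩) :=
      (hψ_realize x hxle).mp hx
    rw [snoc_cons_val n v y hy,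
      trForm_realize hM n hn φ default default (Fin.snoc v ⟨y, hy⟩)]
    -- apply the FA step
    rw [BoundedFormula.realize_all] at hstep
    have hst := hstep ⟨x, hxle⟩
    rw [BoundedFormula.realize_all] at hst
    have hst2 := hst ⟨y, hy⟩
    rw [BoundedFormula.realize_imp, BoundedFormula.realize_inf,
      BoundedFormula.realize_inf] at hst2
    have hkey : (φ.liftAt 1 k).Realize (default : Empty → ArCut M n)
        (Fin.snoc (Fin.snoc v ⟨x, hxle⟩) ⟨y, hy⟩) := by
      apply hst2
      refine ⟨⟨?_, ?_⟩, ?_⟩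
      · simp only [fLt, fv, fN, realize_rel', arRealize_rel, faRealize_rel, cutRelMap_lt, Matrix.cons_val_zero,
          Matrix.cons_val_one, Matrix.head_cons, Term.realize_var, Sum.elim_inr,
          Constants.term, Term.realize_func, arRealize_func, faRealize_func, cutFunMap_top, snoc_snoc_k]
        exact hxltn
      · simp only [fPlus, fv, f1, realize_rel', arRealize_rel, faRealize_rel, cutRelMap_plus, Matrix.cons_val_zero,
          Matrix.cons_val_one, Matrix.head_cons, Matrix.cons_val_two, Matrix.tail_cons,
          Term.realize_var, Sum.elim_inr, Constants.term, Term.realize_func, arRealize_func, faRealize_func,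
          cutFunMap_one n hn, snoc_snoc_k, Fin.snoc_last]
        exact hxy.symm
      · rw [liftAt_realize_self φ _ _ _]
        exact hxφ
    rw [liftAt_realize_penult φ _ _ _ _] at hkey
    exact hkey
  -- conclude
  have hall := hind w ⟨harBase, harStep⟩
  rw [BoundedFormula.realize_all] at hall
  have hb := hall a.val
  rw [hψ_realize a.val a.2] at hb
  exact hb

end Statement1Main
/-- If `M` is a model of `IΔ₀` and `n ∈ M` with `n ≥ 1`, then the
truncation `M↾n` is a model of the full theory of finite arithmetic `FA` (in particular
it satisfies the full induction scheme in the language of finite arithmetic, which is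
part of `FA`). -/
theorem statement_1 (M : Type*) [LAr.Structure M] (hM : M ⊨ IDelta0) (n : M)
    (hn : arLe (arOne M) n) : ArCut M n ⊨ FA := by
  constructor
  intro σ hσ
  rcases hσ with h | ⟨k, φ, rfl⟩
  · simp only [Set.mem_insert_iff, Set.mem_singleton_iff] at h
    rcases h with rfl | rfl | rfl | rfl | rfl | rfl | rfl | rfl | rfl | rfl | rfl | rfl | rfl | rfl
    · exact cut_axIrrefl hM n hn
    · exact cut_axTrans hM n hn
    · exact cut_axTotal hM n hn
    · exact cut_axLeast hM n hn
    · exact cut_axGreatest hM n hn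
    · exact cut_axSucc hM n hn
    · exact cut_axPred hM n hn
    · exact cut_axZeroOne hM n hn
    · exact cut_axPlusFunc hM n hn
    · exact cut_axPlusZero hM n hn
    · exact cut_axPlusSucc hM n hn
    · exact cut_axTimesFunc hM n hn
    · exact cut_axTimesZero hM n hn
    · exact cut_axTimesSucc hM n hn
  · exact cut_faInd hM n hn φ

end UF
end

section
/- (Potentialist translation theorem) Let 𝒲 be a family of substructures of a fixed structure W in a common first-order language, such that every world M ∈ 𝒲 is a substructure of W, and for every world M ∈ 𝒲 and every individual a ∈ W there is a world M' ∈ 𝒲 with M ⊆ M' and a ∈ M'. Then for every first-order formula ψ(x₁,…,x_k), every world M ∈ 𝒲, and every tuple a₁,…,a_k of elements of M: W ⊨ ψ(a₁,…,a_k) if and only if the potentialist translation ψ^◇(a₁,…,a_k) holds at the world M under the potentialist Kripke semantics for 𝒲. -/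
open FirstOrder FirstOrder.Language

namespace UF

/-- **Potentialist translation theorem.** Let `𝒲` be a family of
substructures of a fixed structure `W` (the possible worlds, with accessibility given by
inclusion) such that every world can be extended to a world containing any desired
individual of `W`.  Then for every first-order formula `ψ(x₁, …, x_k)`, every world
`M ∈ 𝒲` and every tuple of elements of `M`, the formula `ψ` holds of the tuple in `W`
if and only if the potentialist translation `ψ^◇` holds of it at the world `M` under the
potentialist Kripke semantics. -/
theorem statement_13 {L : FirstOrder.Language} {W : Type*} [L.Structure W]
    (𝒲 : Set (L.Substructure W))
    (hW : ∀ M ∈ 𝒲, ∀ a : W, ∃ M' ∈ 𝒲, M ≤ M' ∧ a ∈ M')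
    {k : ℕ} (ψ : L.BoundedFormula Empty k) (M : L.Substructure W) (hM : M ∈ 𝒲)
    (a : Fin k → W) (ha : ∀ i, a i ∈ M) :
    ψ.Realize (Empty.elim : Empty → W) a ↔ PotRealize 𝒲 ψ M a := by
  clear ha
  induction ψ generalizing M hM with
  | falsum => exact Iff.rfl
  | equal t u => exact Iff.rfl
  | rel R ts => exact Iff.rfl
  | imp φ₁ φ₂ ih₁ ih₂ =>
      simp only [PotRealize, BoundedFormula.Realize]
      exact imp_congr (ih₁ M hM a) (ih₂ M hM a)
  | all φ ih =>
      simp only [PotRealize, BoundedFormula.realize_all]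
      constructor
      · intro h M' hM' _ b _
        exact (ih M' hM' (Fin.snoc a b)).mp (h b)
      · intro h b
        obtain ⟨M', hM', hle, hb⟩ := hW M hM b
        exact (ih M' hM' (Fin.snoc a b)).mpr (h M' hM' hle b hb)

end UF
end
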